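/- Let l, m ∈ ℝ with 4l² + m² + 4l > 0 and set δ = √(4l² + m² + 4l). Consider the quadratic vector field Z(x,y) = (−y + l x² + m x y − l y², x(1−y)) and the function H(x,y) = (1−y)^l · ((δ−m)x/2 + l y + 1)^{(1 + m/δ)/2} · ((−δ−m)x/2 + l y + 1)^{(1 − m/δ)/2}, defined with real powers on the open set U where all three base factors 1−y, (δ−m)x/2 + ly + 1 and (−δ−m)x/2 + ly + 1 are positive (U is an open neighborhood of the origin). Then H is a first integral of Z on U: for every p ∈ U, H is differentiable at p and ∂H/∂x(p)·Z₁(p) + ∂H/∂y(p)·Z₂(p) = 0. Moreover, H(0,y) = (1−y)^l (l y + 1) for all y with the factors positive. -/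

import Mathlib

/-!
Darboux's method. The three lines `1 - y = 0` and `(±δ - m) x / 2 + l y + 1 = 0` are invariant
under `Z`: along `Z` the derivative of each affine factor `fᵢ` is `Kᵢ fᵢ` for a linear cofactor `Kᵢ`
(for the last two lines this is exactly where `δ² = 4l² + m² + 4l` enters). Hence the logarithmic
derivative of `H = ∏ fᵢ ^ aᵢ` along `Z` is `∑ aᵢ Kᵢ`, and the exponents of `H` make this sum vanish.
-/

def Zq (l m : ℝ) (p : ℝ × ℝ) : ℝ × ℝ :=
  (-p.2 + l * p.1 ^ 2 + m * p.1 * p.2 - l * p.2 ^ 2, p.1 * (1 - p.2))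

noncomputable def Hd (l m δ : ℝ) (p : ℝ × ℝ) : ℝ :=
  (1 - p.2) ^ l * ((δ - m) * p.1 / 2 + l * p.2 + 1) ^ ((1 + m / δ) / 2) *
    ((-δ - m) * p.1 / 2 + l * p.2 + 1) ^ ((1 - m / δ) / 2)

open Finset ContinuousLinearMap

section DarbouxProduct

variable {E ι : Type*} [NormedAddCommGroup E] [NormedSpace ℝ E] (s : Finset ι)
  {f : ι → E → ℝ} {f' : ι → E →L[ℝ] ℝ} {p : E}

theorem hasFDerivAt_finset_prod_rpow (a : ι → ℝ) (hf : ∀ i ∈ s, HasFDerivAt (f i) (f' i) p)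
    (hpos : ∀ i ∈ s, 0 < f i p) :
    HasFDerivAt (fun q => ∏ i ∈ s, f i q ^ a i)
      ((∏ i ∈ s, f i p ^ a i) • ∑ i ∈ s, (a i / f i p) • f' i) p := by
  classical
  induction s using Finset.induction_on with
  | empty => simpa using hasFDerivAt_const (1 : ℝ) p
  | insert j s hj ih =>
    have hj_pos := hpos j (mem_insert_self j s)
    have hfj := (hf j (mem_insert_self j s)).rpow_const (p := a j) (Or.inl hj_pos.ne')
    have hs := ih (fun i hi => hf i (mem_insert_of_mem hi))
      (fun i hi => hpos i (mem_insert_of_mem hi))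
    simp only [prod_insert hj, sum_insert hj]
    refine (hfj.mul hs).congr_fderiv (ContinuousLinearMap.ext fun v => ?_)
    simp only [add_apply, smul_apply, smul_eq_mul, Real.rpow_sub_one hj_pos.ne']
    field_simp
    ring

theorem fderiv_finset_prod_rpow_apply_eq_zero (a K : ι → ℝ) {v : E}
    (hf : ∀ i ∈ s, HasFDerivAt (f i) (f' i) p) (hpos : ∀ i ∈ s, 0 < f i p)
    (hK : ∀ i ∈ s, f' i v = K i * f i p) (hsum : ∑ i ∈ s, a i * K i = 0) :
    fderiv ℝ (fun q => ∏ i ∈ s, f i q ^ a i) p v = 0 := by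
  have hlog : ∑ i ∈ s, (a i / f i p) * f' i v = 0 := by
    rw [← hsum]
    refine sum_congr rfl fun i hi => ?_
    rw [hK i hi]
    field_simp [(hpos i hi).ne']
  rw [(hasFDerivAt_finset_prod_rpow s a hf hpos).fderiv]
  simp [hlog]

end DarbouxProduct

theorem hasFDerivAt_line (a b : ℝ) (p : ℝ × ℝ) :
    HasFDerivAt (fun q : ℝ × ℝ => a * q.1 + b * q.2 + 1) (a • fst ℝ ℝ ℝ + b • snd ℝ ℝ ℝ) p :=
  (a • fst ℝ ℝ ℝ + b • snd ℝ ℝ ℝ).hasFDerivAt.add_const 1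

theorem Zq_line_invariant {l m a b : ℝ} (h₁ : a * (b - l) = 0) (h₂ : a ^ 2 + a * m = b ^ 2 + b)
    (p : ℝ × ℝ) :
    a * (Zq l m p).1 + b * (Zq l m p).2 = (b * p.1 - a * p.2) * (a * p.1 + b * p.2 + 1) := by
  simp only [Zq]
  linear_combination (p.2 ^ 2 - p.1 ^ 2) * h₁ + p.1 * p.2 * h₂

/-- `(a, b)` stands for the line `a x + b y + 1 = 0`. -/
noncomputable def darbouxLines (l m δ : ℝ) : Fin 3 → ℝ × ℝ :=
  ![(0, -1), ((δ - m) / 2, l), ((-δ - m) / 2, l)]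

noncomputable def darbouxExponents (l m δ : ℝ) : Fin 3 → ℝ :=
  ![l, (1 + m / δ) / 2, (1 - m / δ) / 2]

theorem Hd_eq_prod (l m δ : ℝ) :
    Hd l m δ = fun q => ∏ i,
      ((darbouxLines l m δ i).1 * q.1 + (darbouxLines l m δ i).2 * q.2 + 1) ^
        darbouxExponents l m δ i := by
  funext q
  simp only [Hd, Fin.prod_univ_three, darbouxLines, darbouxExponents, Matrix.cons_val]
  ring_nf

theorem darbouxLines_cofactor {l m δ : ℝ} (hδ : δ ^ 2 = 4 * l ^ 2 + m ^ 2 + 4 * l) (i : Fin 3)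
    (p : ℝ × ℝ) :
    (darbouxLines l m δ i).1 * (Zq l m p).1 + (darbouxLines l m δ i).2 * (Zq l m p).2 =
      ((darbouxLines l m δ i).2 * p.1 - (darbouxLines l m δ i).1 * p.2) *
        ((darbouxLines l m δ i).1 * p.1 + (darbouxLines l m δ i).2 * p.2 + 1) := by
  apply Zq_line_invariant <;> fin_cases i <;> simp [darbouxLines] <;> linear_combination hδ / 4

theorem darbouxExponents_cofactor_sum {l m δ : ℝ} (hδ : δ ≠ 0) (p : ℝ × ℝ) :
    ∑ i, darbouxExponents l m δ i *
      ((darbouxLines l m δ i).2 * p.1 - (darbouxLines l m δ i).1 * p.2) = 0 := by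
  simp only [Fin.sum_univ_three, darbouxLines, darbouxExponents, Matrix.cons_val]
  field_simp
  ring

theorem Hd_zero_left (l m δ : ℝ) {y : ℝ} (hy : 0 < l * y + 1) :
    Hd l m δ (0, y) = (1 - y) ^ l * (l * y + 1) := by
  have hsum : (1 + m / δ) / 2 + (1 - m / δ) / 2 = 1 := by ring
  simp only [Hd, mul_zero, zero_div, zero_add, mul_assoc, ← Real.rpow_add hy, hsum, Real.rpow_one]

/-- With `δ = √(4l² + m² + 4l)`, the function `H` is a first integral of
`Z(x,y) = (−y + l x² + m x y − l y², x(1−y))` on the open set where the three base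
factors are positive, and `H(0,y) = (1−y)^l (ly + 1)` there. -/
theorem darboux_first_integral_V2 (l m : ℝ) (hpos : 0 < 4 * l ^ 2 + m ^ 2 + 4 * l) :
    (∀ p : ℝ × ℝ, 0 < 1 - p.2 →
        0 < (Real.sqrt (4 * l ^ 2 + m ^ 2 + 4 * l) - m) * p.1 / 2 + l * p.2 + 1 →
        0 < (-Real.sqrt (4 * l ^ 2 + m ^ 2 + 4 * l) - m) * p.1 / 2 + l * p.2 + 1 →
      DifferentiableAt ℝ (Hd l m (Real.sqrt (4 * l ^ 2 + m ^ 2 + 4 * l))) p ∧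
        fderiv ℝ (Hd l m (Real.sqrt (4 * l ^ 2 + m ^ 2 + 4 * l))) p (Zq l m p) = 0) ∧
    (∀ y : ℝ, 0 < 1 - y → 0 < l * y + 1 →
      Hd l m (Real.sqrt (4 * l ^ 2 + m ^ 2 + 4 * l)) (0, y) = (1 - y) ^ l * (l * y + 1)) := by
  set δ := Real.sqrt (4 * l ^ 2 + m ^ 2 + 4 * l)
  have hδ_pos : 0 < δ := Real.sqrt_pos.mpr hpos
  have hδ_sq : δ ^ 2 = 4 * l ^ 2 + m ^ 2 + 4 * l := Real.sq_sqrt hpos.le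
  refine ⟨fun p h₁ h₂ h₃ => ?_, fun y _ hy => Hd_zero_left l m δ hy⟩
  have hf : ∀ i ∈ univ, HasFDerivAt (fun q : ℝ × ℝ =>
      (darbouxLines l m δ i).1 * q.1 + (darbouxLines l m δ i).2 * q.2 + 1) _ p :=
    fun i _ => hasFDerivAt_line _ _ p
  have hf_pos : ∀ i ∈ univ,
      0 < (darbouxLines l m δ i).1 * p.1 + (darbouxLines l m δ i).2 * p.2 + 1 := by
    intro i _
    fin_cases i <;> simp [darbouxLines] <;> linarith
  rw [Hd_eq_prod]
  exact ⟨(hasFDerivAt_finset_prod_rpow univ _ hf hf_pos).differentiableAt,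
    fderiv_finset_prod_rpow_apply_eq_zero univ _ _ hf hf_pos
      (fun i _ => by simpa using darbouxLines_cofactor hδ_sq i p)
      (darbouxExponents_cofactor_sum hδ_pos.ne' p)⟩
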